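/- arXiv:2605.30770 — 3 statements merged into one kernel-verified Lean document; each statement's English description precedes it below -/
import Mathlib

section
/- Consider a GRU cell with update rule r_t = σ(W_ir x_t + b_ir + W_hr h_{t-1} + b_hr), z_t = σ(W_iz x_t + b_iz + W_hz h_{t-1} + b_hz), n_t = tanh(W_in x_t + b_in + r_t ⊙ (W_hn h_{t-1} + b_hn)), h_t = (1 − z_t) ⊙ n_t + z_t ⊙ h_{t-1}, where every weight matrix has block-symmetric form [[A, B], [B, A]] and every bias has doubled form [a; a]. Then the one-step update F_GRU satisfies F_GRU(M_c x_t, M_c h_{t-1}) = M_c F_GRU(x_t, h_{t-1}). -/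
/-- Block-symmetric matrix `[[A, B], [B, A]]`. -/
def ssrBlock {m n : ℕ} (A B : Matrix (Fin m) (Fin n) ℝ) :
    Matrix (Fin m ⊕ Fin m) (Fin n ⊕ Fin n) ℝ :=
  Matrix.fromBlocks A B B A

/-- Doubled bias `[a; a]`. -/
def ssrDbl {m : ℕ} (a : Fin m → ℝ) : Fin m ⊕ Fin m → ℝ := Sum.elim a a

/-- One GRU step with block-symmetric weights and doubled biases. -/
noncomputable def gruStep {Cin Ch : ℕ} (σ : ℝ → ℝ)
    (Air Bir Aiz Biz Ain Bin : Matrix (Fin Ch) (Fin Cin) ℝ)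
    (Ahr Bhr Ahz Bhz Ahn Bhn : Matrix (Fin Ch) (Fin Ch) ℝ)
    (air ahr aiz ahz ain ahn : Fin Ch → ℝ)
    (x : Fin Cin ⊕ Fin Cin → ℝ) (h : Fin Ch ⊕ Fin Ch → ℝ) :
    Fin Ch ⊕ Fin Ch → ℝ :=
  let r : Fin Ch ⊕ Fin Ch → ℝ := fun i =>
    σ (((ssrBlock Air Bir).mulVec x + ssrDbl air
        + (ssrBlock Ahr Bhr).mulVec h + ssrDbl ahr) i)
  let z : Fin Ch ⊕ Fin Ch → ℝ := fun i =>
    σ (((ssrBlock Aiz Biz).mulVec x + ssrDbl aiz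
        + (ssrBlock Ahz Bhz).mulVec h + ssrDbl ahz) i)
  let n : Fin Ch ⊕ Fin Ch → ℝ := fun i =>
    Real.tanh (((ssrBlock Ain Bin).mulVec x + ssrDbl ain) i
        + r i * (((ssrBlock Ahn Bhn).mulVec h + ssrDbl ahn) i))
  fun i => (1 - z i) * n i + z i * h i

namespace Matrix

theorem fromBlocks_symm_mulVec_comp_swap {m n α : Type*} [Fintype n]
    [NonUnitalNonAssocSemiring α] (A B : Matrix m n α) (x : n ⊕ n → α) :
    fromBlocks A B B A *ᵥ (x ∘ Sum.swap) = (fromBlocks A B B A *ᵥ x) ∘ Sum.swap := by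
  ext (i | i) <;> simp [fromBlocks_mulVec, Function.comp_def, add_comm]

end Matrix

open Matrix

theorem ssrBlock_mulVec_comp_swap {m n : ℕ} (A B : Matrix (Fin m) (Fin n) ℝ)
    (x : Fin n ⊕ Fin n → ℝ) :
    ssrBlock A B *ᵥ (x ∘ Sum.swap) = (ssrBlock A B *ᵥ x) ∘ Sum.swap :=
  fromBlocks_symm_mulVec_comp_swap A B x

theorem ssrDbl_swap {m : ℕ} (a : Fin m → ℝ) (i : Fin m ⊕ Fin m) :
    ssrDbl a i.swap = ssrDbl a i :=
  congrFun Sum.elim_swap i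

/-- A GRU cell whose weight matrices are block-symmetric
`[[A, B], [B, A]]` and whose biases are doubled `[a; a]` is equivariant under
the channel-exchange operator: `F(M_c x, M_c h) = M_c F(x, h)`. -/
theorem gruStep_channelExchange_equivariant
    (Cin Ch : ℕ) (σ : ℝ → ℝ)
    (Air Bir Aiz Biz Ain Bin : Matrix (Fin Ch) (Fin Cin) ℝ)
    (Ahr Bhr Ahz Bhz Ahn Bhn : Matrix (Fin Ch) (Fin Ch) ℝ)
    (air ahr aiz ahz ain ahn : Fin Ch → ℝ)
    (x : Fin Cin ⊕ Fin Cin → ℝ) (h : Fin Ch ⊕ Fin Ch → ℝ) :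
    gruStep σ Air Bir Aiz Biz Ain Bin Ahr Bhr Ahz Bhz Ahn Bhn
        air ahr aiz ahz ain ahn (x ∘ Sum.swap) (h ∘ Sum.swap)
      = (gruStep σ Air Bir Aiz Biz Ain Bin Ahr Bhr Ahz Bhz Ahn Bhn
          air ahr aiz ahz ain ahn x h) ∘ Sum.swap := by
  funext i
  -- σ, tanh and the gating act componentwise, so it suffices to pull `Sum.swap` out of each
  -- pre-activation.
  simp only [gruStep, ssrBlock_mulVec_comp_swap, Pi.add_apply, Function.comp_apply, ssrDbl_swap]
end

section
/- For strided, padded cross-correlation of a feature map x ∈ ℝ^(C_in × H × W) with kernel k ∈ ℝ^(C_out × C_in × K_H × K_W), defined by (x ⋆ k)_{o,h,w} = Σ_{i,u,v} k_{o,i,u,v} · x̄_{i,(h−1)s+u,(w−1)s+v} where x̄ is the zero-padded input of width W̄ = W + 2p_W, and assuming W̄ − K_W is divisible by the stride s, the flip identity holds: (M_2D x) ⋆ k = M_2D (x ⋆ (M_2D k)), where M_2D flips feature maps horizontally (last index w ↦ W̄+1−w on padded maps, and output index w ↦ W_o+1−w) and flips kernels horizontally (v ↦ K_W+1−v). -/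
/-- Zero padding of a 1-indexed feature map of height `H` and width `W` by
`pH` rows and `pW` columns on each side. -/
def ssrPad (H W pH pW : ℕ) {ι : Type*} (x : ι → ℕ → ℕ → ℝ) : ι → ℕ → ℕ → ℝ :=
  fun i r c =>
    if pH + 1 ≤ r ∧ r ≤ pH + H ∧ pW + 1 ≤ c ∧ c ≤ pW + W then
      x i (r - pH) (c - pW)
    else 0

/-- Strided cross-correlation (1-indexed) of a (padded) feature map `xb` with
kernel `k`, stride `s`, kernel size `KH × KW`:
`(x ⋆ k)_{o,h,w} = Σ_{i,u,v} k_{o,i,u,v} · x̄_{i,(h−1)s+u,(w−1)s+v}`. -/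
def ssrCorr (s KH KW : ℕ) {ι κ : Type*} [Fintype ι]
    (k : κ → ι → ℕ → ℕ → ℝ) (xb : ι → ℕ → ℕ → ℝ) : κ → ℕ → ℕ → ℝ :=
  fun o h w =>
    ∑ i : ι, ∑ u ∈ Finset.Icc 1 KH, ∑ v ∈ Finset.Icc 1 KW,
      k o i u v * xb i ((h - 1) * s + u) ((w - 1) * s + v)

/-- Horizontal flip of a 1-indexed feature map of width `n`. -/
def ssrFlipW (n : ℕ) {ι : Type*} (x : ι → ℕ → ℕ → ℝ) : ι → ℕ → ℕ → ℝ :=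
  fun i r c => x i r (n + 1 - c)

/-- Horizontal flip of a kernel of width `KW` (`v ↦ KW + 1 − v`). -/
def ssrFlipK (KW : ℕ) {ι κ : Type*} (k : κ → ι → ℕ → ℕ → ℝ) :
    κ → ι → ℕ → ℕ → ℝ :=
  fun o i u v => k o i u (KW + 1 - v)

/-- The flip identity for strided, padded cross-correlation:
`(M_2D x) ⋆ k = M_2D (x ⋆ (M_2D k))`, i.e. for every output channel `o`, row
`h`, and column `1 ≤ w ≤ W_o`, correlating the horizontally flipped input with
`k` gives the horizontally flipped result of correlating the input with the
horizontally flipped kernel. -/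
theorem crossCorrelation_flip_identity
    (Cin Cout H W pH pW KH KW s : ℕ)
    (hs : 0 < s) (hK : KW ≤ W + 2 * pW) (hdiv : s ∣ (W + 2 * pW - KW))
    (x : Fin Cin → ℕ → ℕ → ℝ) (k : Fin Cout → Fin Cin → ℕ → ℕ → ℝ)
    (Wo : ℕ) (hWo : Wo = (W + 2 * pW - KW) / s + 1)
    (o : Fin Cout) (h w : ℕ) (hw1 : 1 ≤ w) (hw2 : w ≤ Wo) :
    ssrCorr s KH KW k (ssrPad H W pH pW (ssrFlipW W x)) o h w
      = ssrCorr s KH KW (ssrFlipK KW k) (ssrPad H W pH pW x) o h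
          (Wo + 1 - w) := by
  have hq : (Wo - 1) * s = W + 2 * pW - KW := by
    rw [hWo]; simpa using Nat.div_mul_cancel hdiv
  unfold ssrCorr
  refine Finset.sum_congr rfl fun i _ => Finset.sum_congr rfl fun u _ => ?_
  refine Finset.sum_nbij' (fun v => KW + 1 - v) (fun v => KW + 1 - v)
    (fun v hv => ?_) (fun v hv => ?_) (fun v hv => ?_) (fun v hv => ?_)
    (fun v hv => ?_) <;> rw [Finset.mem_Icc] at * <;> try omega
  obtain ⟨hv1, hv2⟩ := hv
  have hws : (w - 1) * s ≤ (Wo - 1) * s := Nat.mul_le_mul_right s (by omega)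
  have hkk : ssrFlipK KW k o i u (KW + 1 - v) = k o i u v := by
    unfold ssrFlipK; congr 1; omega
  rw [hkk]
  congr 1
  unfold ssrPad ssrFlipW
  have hsub : (Wo - w) * s = (Wo - 1) * s - (w - 1) * s := by
    rw [← Nat.sub_mul]; congr 1; omega
  have key : (Wo + 1 - w - 1) * s + (KW + 1 - v)
      = W + 2 * pW + 1 - ((w - 1) * s + v) := by
    have : (Wo + 1 - w - 1) = Wo - w := by omega
    rw [this, hsub, hq]; omega
  rw [key]
  by_cases hc : pH + 1 ≤ (h - 1) * s + u ∧ (h - 1) * s + u ≤ pH + H ∧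
      pW + 1 ≤ (w - 1) * s + v ∧ (w - 1) * s + v ≤ pW + W
  · rw [if_pos hc, if_pos (by omega)]
    congr 1
    omega
  · rw [if_neg hc, if_neg (by omega)]
end

section
/- Let the lift convolution be f_l(x) = x ⋆ K_l + b_l, where K_l stacks a kernel k_l and its horizontal flip M_2D k_l along the output channel dimension (giving 2C_out output channels) and b_l = [a; a]. Then f_l(M_2D x) = M_c M_2D (f_l(x)), where M_c swaps the two output channel groups and M_2D is the horizontal flip acting on the spatial width dimension. -/
/-- The lift convolution: the kernel `k_l` produces the first output channel
group and its horizontal flip `M_2D k_l` the second; the bias `a` is shared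
(doubled, `[a; a]`). -/
noncomputable def ssrLift (H W pH pW s KH KW : ℕ) {Cin Cout : ℕ}
    (kl : Fin Cout → Fin Cin → ℕ → ℕ → ℝ) (a : Fin Cout → ℝ)
    (x : Fin Cin → ℕ → ℕ → ℝ) : Fin Cout ⊕ Fin Cout → ℕ → ℕ → ℝ :=
  fun o h w =>
    Sum.elim
      (fun o' => ssrCorr s KH KW kl (ssrPad H W pH pW x) o' h w + a o')
      (fun o' => ssrCorr s KH KW (ssrFlipK KW kl) (ssrPad H W pH pW x) o' h w
          + a o')
      o

theorem Finset.sum_Icc_one_reflect {M : Type*} [AddCommMonoid M] (f : ℕ → M) (n : ℕ) :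
    ∑ v ∈ Finset.Icc 1 n, f (n + 1 - v) = ∑ v ∈ Finset.Icc 1 n, f v :=
  Finset.sum_nbij' (fun v => n + 1 - v) (fun v => n + 1 - v)
    (fun v hv => by simp only [Finset.mem_Icc] at hv ⊢; omega)
    (fun v hv => by simp only [Finset.mem_Icc] at hv ⊢; omega)
    (fun v hv => by simp only [Finset.mem_Icc] at hv; omega)
    (fun v hv => by simp only [Finset.mem_Icc] at hv; omega)
    (fun _ _ => rfl)

theorem ssrPad_ssrFlipW (H W pH pW : ℕ) {ι : Type*} (x : ι → ℕ → ℕ → ℝ) :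
    ssrPad H W pH pW (ssrFlipW W x) = ssrFlipW (W + 2 * pW) (ssrPad H W pH pW x) := by
  funext i r c
  simp only [ssrPad, ssrFlipW]
  split_ifs
  · rw [show W + 1 - (c - pW) = W + 2 * pW + 1 - c - pW by omega]
  all_goals first | rfl | omega

/-- The window starting at column `(w - 1) * s + 1` is mirrored onto the one starting at
`(Wo - w) * s + 1`, read backwards. -/
theorem ssrCorr_ssrFlipW {s KH KW Wo : ℕ} {ι κ : Type*} [Fintype ι]
    (k : κ → ι → ℕ → ℕ → ℝ) (xb : ι → ℕ → ℕ → ℝ) (o : κ) (h : ℕ) {w : ℕ}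
    (hw1 : 1 ≤ w) (hw2 : w ≤ Wo) :
    ssrCorr s KH KW k (ssrFlipW ((Wo - 1) * s + KW) xb) o h w
      = ssrCorr s KH KW (ssrFlipK KW k) xb o h (Wo + 1 - w) := by
  have hcols : (w - 1) * s + (Wo + 1 - w - 1) * s = (Wo - 1) * s := by
    rw [← add_mul]; congr 1; omega
  unfold ssrCorr ssrFlipK ssrFlipW
  refine Finset.sum_congr rfl fun i _ => Finset.sum_congr rfl fun u _ => ?_
  rw [← Finset.sum_Icc_one_reflect _ KW]
  refine Finset.sum_congr rfl fun v hv => ?_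
  rw [Finset.mem_Icc] at hv
  congr 2
  omega

theorem ssrCorr_ssrFlipK_ssrFlipK (s KH KW : ℕ) {ι κ : Type*} [Fintype ι]
    (k : κ → ι → ℕ → ℕ → ℝ) :
    ssrCorr s KH KW (ssrFlipK KW (ssrFlipK KW k)) = ssrCorr s KH KW k := by
  funext xb o h w
  unfold ssrCorr ssrFlipK
  refine Finset.sum_congr rfl fun i _ => Finset.sum_congr rfl fun u _ =>
    Finset.sum_congr rfl fun v hv => ?_
  rw [Finset.mem_Icc] at hv
  rw [show KW + 1 - (KW + 1 - v) = v by omega]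

theorem liftConvolution_equivariant_general
    (Cin Cout H W pH pW KH KW s : ℕ)
    (hK : KW ≤ W + 2 * pW) (hdiv : s ∣ (W + 2 * pW - KW))
    (kl : Fin Cout → Fin Cin → ℕ → ℕ → ℝ) (a : Fin Cout → ℝ)
    (x : Fin Cin → ℕ → ℕ → ℝ)
    (Wo : ℕ) (hWo : Wo = (W + 2 * pW - KW) / s + 1)
    (o : Fin Cout ⊕ Fin Cout) (h w : ℕ) (hw1 : 1 ≤ w) (hw2 : w ≤ Wo) :
    ssrLift H W pH pW s KH KW kl a (ssrFlipW W x) o h w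
      = ssrLift H W pH pW s KH KW kl a x (Sum.swap o) h (Wo + 1 - w) := by
  have hwidth : W + 2 * pW = (Wo - 1) * s + KW := by
    rw [hWo, Nat.add_sub_cancel, Nat.div_mul_cancel hdiv]; omega
  have hflip : ∀ (k : Fin Cout → Fin Cin → ℕ → ℕ → ℝ) (o' : Fin Cout),
      ssrCorr s KH KW k (ssrPad H W pH pW (ssrFlipW W x)) o' h w
        = ssrCorr s KH KW (ssrFlipK KW k) (ssrPad H W pH pW x) o' h (Wo + 1 - w) := by
    intro k o'
    rw [ssrPad_ssrFlipW, hwidth, ssrCorr_ssrFlipW k _ o' h hw1 hw2]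
  cases o <;>
    simp only [ssrLift, Sum.swap_inl, Sum.swap_inr, Sum.elim_inl, Sum.elim_inr, hflip,
      ssrCorr_ssrFlipK_ssrFlipK]

/-- The lift convolution satisfies
`f_l(M_2D x) = M_c M_2D (f_l(x))`: evaluating the lift convolution on the
horizontally flipped input at output channel `o`, row `h`, column `1 ≤ w ≤ W_o`
equals the output on the original input at the swapped channel group and the
horizontally mirrored column `W_o + 1 − w`. -/
theorem liftConvolution_equivariant
    (Cin Cout H W pH pW KH KW s : ℕ)
    (hs : 0 < s) (hK : KW ≤ W + 2 * pW) (hdiv : s ∣ (W + 2 * pW - KW))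
    (kl : Fin Cout → Fin Cin → ℕ → ℕ → ℝ) (a : Fin Cout → ℝ)
    (x : Fin Cin → ℕ → ℕ → ℝ)
    (Wo : ℕ) (hWo : Wo = (W + 2 * pW - KW) / s + 1)
    (o : Fin Cout ⊕ Fin Cout) (h w : ℕ) (hw1 : 1 ≤ w) (hw2 : w ≤ Wo) :
    ssrLift H W pH pW s KH KW kl a (ssrFlipW W x) o h w
      = ssrLift H W pH pW s KH KW kl a x (Sum.swap o) h (Wo + 1 - w) :=
  liftConvolution_equivariant_general Cin Cout H W pH pW KH KW s hK hdiv kl a x Wo hWo o h w hw1 hw2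
end
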